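/- arXiv:2312.02435 — 4 statements merged into one kernel-verified Lean document; each statement's English description precedes it below -/
import Mathlib

section
/- For binary random variables X and Y, b(X) - b(Y) ≤ (1/2)·Br(X|Y), where b(Z) = min(Pr[Z=0],Pr[Z=1]) and Br(X|Y) = 2·∑_y min(Pr[X=0,Y=y],Pr[X=1,Y=y]). -/
open MeasureTheory

/-- b(X) - b(Y) ≤ (1/2)·Br(X|Y), where b(Z) = min(Pr[Z=0],Pr[Z=1]) and
Br(X|Y) = 2·∑_y min(Pr[X=0,Y=y],Pr[X=1,Y=y]). -/
theorem bias_diff_le_half_br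
    {Ω : Type*} [MeasurableSpace Ω] (μ : Measure Ω) [IsProbabilityMeasure μ]
    (X Y : Ω → Bool) (hX : Measurable X) (hY : Measurable Y) :
    min ((μ {ω | X ω = false}).toReal) ((μ {ω | X ω = true}).toReal)
      - min ((μ {ω | Y ω = false}).toReal) ((μ {ω | Y ω = true}).toReal)
      ≤ (1 / 2) * (2 * ∑ y : Bool,
          min ((μ {ω | X ω = false ∧ Y ω = y}).toReal)
              ((μ {ω | X ω = true ∧ Y ω = y}).toReal)) := by
  have hmeas : ∀ x y : Bool, MeasurableSet {ω | X ω = x ∧ Y ω = y} := fun x y =>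
    (hX (measurableSet_singleton x)).inter (hY (measurableSet_singleton y))
  have hnn : ∀ x y : Bool, 0 ≤ (μ {ω | X ω = x ∧ Y ω = y}).toReal := fun _ _ =>
    ENNReal.toReal_nonneg
  have hXsplit : ∀ x : Bool, (μ {ω | X ω = x}).toReal =
      (μ {ω | X ω = x ∧ Y ω = false}).toReal + (μ {ω | X ω = x ∧ Y ω = true}).toReal := by
    intro x
    have hset : {ω | X ω = x} = {ω | X ω = x ∧ Y ω = false} ∪ {ω | X ω = x ∧ Y ω = true} := by
      ext ω; by_cases h : Y ω = true <;> simp_all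
    have hdisj : Disjoint {ω | X ω = x ∧ Y ω = false} {ω | X ω = x ∧ Y ω = true} := by
      rw [Set.disjoint_left]; rintro ω ⟨-, h⟩ ⟨-, h'⟩; simp_all
    rw [← ENNReal.toReal_add (measure_ne_top _ _) (measure_ne_top _ _),
      ← measure_union hdisj (hmeas x true), ← hset]
  have hYsplit : ∀ y : Bool, (μ {ω | Y ω = y}).toReal =
      (μ {ω | X ω = false ∧ Y ω = y}).toReal + (μ {ω | X ω = true ∧ Y ω = y}).toReal := by
    intro y
    have hset : {ω | Y ω = y} = {ω | X ω = false ∧ Y ω = y} ∪ {ω | X ω = true ∧ Y ω = y} := by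
      ext ω; by_cases h : X ω = true <;> simp_all
    have hdisj : Disjoint {ω | X ω = false ∧ Y ω = y} {ω | X ω = true ∧ Y ω = y} := by
      rw [Set.disjoint_left]; rintro ω ⟨h, -⟩ ⟨h', -⟩; simp_all
    rw [← ENNReal.toReal_add (measure_ne_top _ _) (measure_ne_top _ _),
      ← measure_union hdisj (hmeas true y), ← hset]
  rw [Fintype.sum_bool, hXsplit false, hXsplit true, hYsplit false, hYsplit true]
  have h00 := hnn false false
  have h01 := hnn false true
  have h10 := hnn true false
  have h11 := hnn true true
  simp only [min_def]
  split_ifs <;> linarith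
end

section
/- Let (S,d) be a metric space and M : S → ℝ≥0 a function satisfying the Lipschitz property |M(x) - M(y)| ≤ d(x,y) for all x,y. Then the Lipschitz-capped distance d'(x,y) = min(d(x,y), max(M(x), M(y))) satisfies the triangle inequality. -/
set_option maxHeartbeats 1000000 in
/-- If M : S → ℝ≥0 is 1-Lipschitz w.r.t. the metric d, then the
Lipschitz-capped distance d'(x,y) = min(d(x,y), max(M(x),M(y))) satisfies
the triangle inequality. -/
theorem lipschitz_capped_triangle
    {S : Type*} [MetricSpace S] (M : S → ℝ) (hM : ∀ x, 0 ≤ M x)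
    (hLip : ∀ x y : S, |M x - M y| ≤ dist x y) :
    ∀ x y z : S,
      min (dist x z) (max (M x) (M z))
        ≤ min (dist x y) (max (M x) (M y)) + min (dist y z) (max (M y) (M z)) := by
  intro x y z
  have mx := hM x
  have my := hM y
  have mz := hM z
  have hxy := dist_triangle x y z
  have h1 := abs_le.mp (hLip x y)
  have h2 := abs_le.mp (hLip y z)
  have h3 := abs_le.mp (hLip x z)
  have d1 := dist_nonneg (x := x) (y := y)
  have d2 := dist_nonneg (x := y) (y := z)
  have d3 := dist_nonneg (x := x) (y := z)
  rcases le_total (dist x y) (max (M x) (M y)) with ha | ha <;>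
  rcases le_total (dist y z) (max (M y) (M z)) with hb | hb <;>
  simp only [min_def, max_def] <;> split_ifs <;> linarith
end

section
/- Let F_1,...,F_k be independent Bernoulli variables with parameters θ_i ∈ [0,1/2] for all i, and suppose ∑_i θ_i > 1/2. Then the probability that ∑ F_i is odd is at least 2^{-4}. -/
/-!
Encode each flip by its sign `(-1) ^ F i`. The sign of the sum is the product of the signs, so
by independence `1 - 2 P(∑ F i odd) = E[∏ (-1) ^ F i] = ∏ (1 - 2 θ i)`. Since
`0 ≤ 1 - 2 θ i ≤ exp (-2 θ i)`, this product is at most `exp (-2 ∑ θ i) < exp (-1) < 1 / 2`, so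
the odd parity has probability more than `1 / 4`.
-/

open MeasureTheory ProbabilityTheory Finset

lemma prod_ite_neg_one_one {ι R : Type*} [CommMonoid R] [HasDistribNeg R] (s : Finset ι)
    (p : ι → Prop) [DecidablePred p] :
    ∏ i ∈ s, (if p i then (-1 : R) else 1) = if Odd #{i ∈ s | p i} then -1 else 1 := by
  rw [prod_ite, prod_const, prod_const_one, mul_one]
  rcases Nat.even_or_odd #{i ∈ s | p i} with h | h
  · rw [h.neg_one_pow, if_neg (Nat.not_odd_iff_even.2 h)]
  · rw [h.neg_one_pow, if_pos h]

lemma prod_one_sub_le_exp_neg_sum {ι : Type*} (s : Finset ι) {a : ι → ℝ}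
    (ha : ∀ i ∈ s, a i ≤ 1) : ∏ i ∈ s, (1 - a i) ≤ Real.exp (-∑ i ∈ s, a i) := by
  rw [← sum_neg_distrib, Real.exp_sum]
  exact prod_le_prod (fun i hi => sub_nonneg.2 (ha i hi)) fun i _ => Real.one_sub_le_exp_neg _

section Parity

variable {Ω : Type*} [MeasurableSpace Ω] {μ : Measure Ω} [IsProbabilityMeasure μ]

lemma integral_ite_neg_one_one {p : Ω → Prop} [DecidablePred p] (hp : MeasurableSet {ω | p ω}) :
    ∫ ω, (if p ω then (-1 : ℝ) else 1) ∂μ = 1 - 2 * μ.real {ω | p ω} := by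
  have hsign : (fun ω => if p ω then (-1 : ℝ) else 1) =
      fun ω => 1 - 2 * {ω | p ω}.indicator 1 ω := by
    ext ω
    by_cases h : p ω <;> norm_num [h]
  rw [hsign, integral_sub (integrable_const _) (((integrable_const 1).indicator hp).const_mul 2),
    integral_const_mul, integral_indicator_one hp]
  simp

theorem one_sub_two_mul_measureReal_odd_card {ι : Type*} [Fintype ι] {F : ι → Ω → Bool}
    (hF : ∀ i, Measurable (F i)) (hindep : iIndepFun F μ) :
    1 - 2 * μ.real {ω | Odd #{i | F i ω = true}} = ∏ i, (1 - 2 * μ.real {ω | F i ω = true}) := by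
  have hodd : MeasurableSet {ω | Odd #{i | F i ω = true}} :=
    measurable_pi_lambda _ hF
      (Set.to_countable {x : ι → Bool | Odd #{i | x i = true}}).measurableSet
  calc 1 - 2 * μ.real {ω | Odd #{i | F i ω = true}}
      = ∫ ω, (if Odd #{i | F i ω = true} then (-1 : ℝ) else 1) ∂μ :=
        (integral_ite_neg_one_one hodd).symm
    _ = ∫ ω, ∏ i, (if F i ω = true then (-1 : ℝ) else 1) ∂μ := by
        simp only [prod_ite_neg_one_one]
    _ = ∏ i, ∫ ω, (if F i ω = true then (-1 : ℝ) else 1) ∂μ :=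
        hindep.integral_fun_prod_comp (f := fun _ b => if b = true then (-1 : ℝ) else 1)
          (fun i => (hF i).aemeasurable) fun _ => Measurable.of_discrete.aestronglyMeasurable
    _ = ∏ i, (1 - 2 * μ.real {ω | F i ω = true}) :=
        prod_congr rfl fun i _ => integral_ite_neg_one_one (hF i (measurableSet_singleton true))

end Parity

/-- If F_1,…,F_k are independent Bernoulli(θ_i) with θ_i ∈ [0,1/2] and
∑ θ_i > 1/2, then the probability that an odd number of the F_i equal 1 is
at least 2⁻⁴. -/
theorem odd_flips_lower_bound
    {Ω : Type*} [MeasurableSpace Ω] (μ : Measure Ω) [IsProbabilityMeasure μ]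
    (k : ℕ) (θ : Fin k → ℝ) (F : Fin k → Ω → Bool)
    (hmeas : ∀ i, Measurable (F i))
    (hindep : ProbabilityTheory.iIndepFun F μ)
    (hθ : ∀ i, (μ {ω | F i ω = true}).toReal = θ i)
    (hθhalf : ∀ i, θ i ∈ Set.Icc (0 : ℝ) (1 / 2))
    (hsum : 1 / 2 < ∑ i, θ i) :
    (2 : ℝ)⁻¹ ^ 4 ≤
      (μ {ω | Odd (Finset.univ.filter (fun i => F i ω = true)).card}).toReal := by
  have hparity := one_sub_two_mul_measureReal_odd_card hmeas hindep
  simp only [measureReal_def, hθ] at hparity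
  have hprod : ∏ i, (1 - 2 * θ i) ≤ Real.exp (-1) :=
    (prod_one_sub_le_exp_neg_sum univ fun i _ => by linarith [(hθhalf i).2]).trans
      (Real.exp_le_exp.2 (by rw [← mul_sum]; linarith))
  linarith [Real.exp_neg_one_lt_half]
end

section
/- Let R_1,...,R_d be independent random variables with each R_i ∈ [0, M] almost surely, and suppose E[∑_{i=1}^d R_i] ≥ c·M for a constant 0 < c ≤ 1. Then Pr[∑_{i=1}^d R_i ≥ (c²/100)·M] ≥ min(1/100, 1 − (1−(99c/100)²)/(1 − c²/100)). -/
/-!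
For `S = ∑ R_i` with mean `u`, the Paley–Zygmund inequality gives
`(u - t)² ≤ E[S²] · P(S ≥ t)` for `0 ≤ t ≤ u`. Independence and `0 ≤ R_i ≤ M` give
`Var S = ∑ Var R_i ≤ M · u ≤ u² / c`, so `E[S²] ≤ (1 + 1/c) u²`. Taking `t = (c/100) u`, which is
at least `(c²/100) M`, yields `P(S ≥ (c²/100) M) ≥ c (1 - c/100)² / (1 + c)`, and this dominates
the stated minimum for every `c ∈ (0, 1]`.
-/

open MeasureTheory ProbabilityTheory

section

variable {Ω : Type*} [MeasurableSpace Ω] {μ : Measure Ω}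

theorem sq_setIntegral_le_integral_sq_mul_measureReal [IsFiniteMeasure μ] {X : Ω → ℝ}
    (hX : MemLp X 2 μ) {A : Set Ω} (hA : MeasurableSet A) :
    (∫ ω in A, X ω ∂μ) ^ 2 ≤ (∫ ω, X ω ^ 2 ∂μ) * μ.real A := by
  set χ := A.indicator fun _ ↦ (1 : ℝ)
  have hχ : MemLp χ (ENNReal.ofReal 2) μ :=
    memLp_indicator_const _ hA 1 (Or.inr (measure_ne_top μ A))
  have holder := integral_mul_norm_le_Lp_mul_Lq Real.HolderConjugate.two_two
    (by simpa using hX) hχ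
  have hnormχ : ∫ ω, ‖χ ω‖ ^ (2 : ℝ) ∂μ = μ.real A := by
    rw [← integral_indicator_one hA]
    congr 1 with ω
    by_cases hω : ω ∈ A <;> simp [χ, hω]
  have hsetIntegral : ∫ ω in A, ‖X ω‖ ∂μ = ∫ ω, ‖X ω‖ * ‖χ ω‖ ∂μ := by
    rw [← integral_indicator hA]
    congr 1 with ω
    by_cases hω : ω ∈ A <;> simp [χ, hω]
  simp only [Real.norm_eq_abs, sq_abs, Real.rpow_two, ← Real.sqrt_eq_rpow] at holder hnormχ
  calc (∫ ω in A, X ω ∂μ) ^ 2 ≤ (∫ ω in A, ‖X ω‖ ∂μ) ^ 2 := by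
        rw [← sq_abs]
        exact pow_le_pow_left₀ (abs_nonneg _) abs_integral_le_integral_abs 2
    _ ≤ (√(∫ ω, X ω ^ 2 ∂μ) * √(μ.real A)) ^ 2 := by
        rw [hsetIntegral, ← hnormχ]
        exact pow_le_pow_left₀ (integral_nonneg fun _ ↦ by positivity) holder 2
    _ = _ := by
        rw [mul_pow, Real.sq_sqrt (integral_nonneg fun _ ↦ sq_nonneg _),
          Real.sq_sqrt measureReal_nonneg]

theorem sq_integral_sub_le_integral_sq_mul_measureReal_le [IsProbabilityMeasure μ] {X : Ω → ℝ}
    (hXm : Measurable X) (hX : MemLp X 2 μ) {t : ℝ} (ht : 0 ≤ t) (htX : t ≤ μ[X]) :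
    (μ[X] - t) ^ 2 ≤ (∫ ω, X ω ^ 2 ∂μ) * μ.real {ω | t ≤ X ω} := by
  set A := {ω | t ≤ X ω}
  have hA : MeasurableSet A := measurableSet_le measurable_const hXm
  have hXint : Integrable X μ := hX.integrable one_le_two
  have hcompl : ∫ ω in Aᶜ, X ω ∂μ ≤ t :=
    calc ∫ ω in Aᶜ, X ω ∂μ ≤ ∫ _ in Aᶜ, t ∂μ :=
          setIntegral_mono_on hXint.integrableOn (integrable_const t).integrableOn hA.compl
            fun _ hω ↦ le_of_not_ge hω
      _ = μ.real Aᶜ * t := by rw [setIntegral_const, smul_eq_mul]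
      _ ≤ t := mul_le_of_le_one_left ht measureReal_le_one
  have hsplit : ∫ ω in A, X ω ∂μ + ∫ ω in Aᶜ, X ω ∂μ = μ[X] := integral_add_compl hA hXint
  calc (μ[X] - t) ^ 2 ≤ (∫ ω in A, X ω ∂μ) ^ 2 :=
        pow_le_pow_left₀ (sub_nonneg.mpr htX) (by linarith) 2
    _ ≤ _ := sq_setIntegral_le_integral_sq_mul_measureReal hX hA

theorem mul_sq_one_sub_le_measureReal_ge [IsProbabilityMeasure μ] {X : Ω → ℝ}
    (hXm : Measurable X) (hX : MemLp X 2 μ) {c θ : ℝ} (hc : 0 ≤ c) (hθ0 : 0 ≤ θ) (hθ1 : θ ≤ 1)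
    (hX0 : 0 < μ[X]) (hvar : c * variance X μ ≤ μ[X] ^ 2) :
    c * (1 - θ) ^ 2 ≤ (1 + c) * μ.real {ω | θ * μ[X] ≤ X ω} := by
  set u := μ[X]
  set p := μ.real {ω | θ * u ≤ X ω}
  have hPZ := sq_integral_sub_le_integral_sq_mul_measureReal_le hXm hX
    (mul_nonneg hθ0 hX0.le) (mul_le_of_le_one_left hX0.le hθ1)
  have hmoment : ∫ ω, X ω ^ 2 ∂μ = variance X μ + u ^ 2 := by
    rw [variance_eq_sub hX]; simp [u]
  rw [hmoment] at hPZ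
  have hscaled : u ^ 2 * (c * (1 - θ) ^ 2) ≤ u ^ 2 * ((1 + c) * p) := by
    calc u ^ 2 * (c * (1 - θ) ^ 2) = c * (u - θ * u) ^ 2 := by ring
      _ ≤ c * ((variance X μ + u ^ 2) * p) := mul_le_mul_of_nonneg_left hPZ hc
      _ = (c * variance X μ + c * u ^ 2) * p := by ring
      _ ≤ (u ^ 2 + c * u ^ 2) * p := by gcongr
      _ = u ^ 2 * ((1 + c) * p) := by ring
  exact le_of_mul_le_mul_left hscaled (by positivity)

theorem min_anticoncentration_bound_le {c : ℝ} (hc : 0 < c) (hc' : c ≤ 1) :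
    min (1 / 100) (1 - (1 - (99 * c / 100) ^ 2) / (1 - c ^ 2 / 100))
      ≤ c * (1 - c / 100) ^ 2 / (1 + c) := by
  have hsq : 98 / 100 ≤ (1 - c / 100) ^ 2 := by nlinarith
  rw [le_div_iff₀ (by linarith)]
  -- For small `c` the second term of the minimum is of order `c²`, the bound of order `c`.
  rcases le_or_gt (1 / 50) c with hc50 | hc50
  · calc min (1 / 100) _ * (1 + c) ≤ 1 / 100 * (1 + c) := by gcongr; exact min_le_left _ _
      _ ≤ c * (1 - c / 100) ^ 2 := by nlinarith [mul_le_mul_of_nonneg_left hsq hc.le]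
  · have hden : 99 / 100 ≤ 1 - c ^ 2 / 100 := by nlinarith
    have hB : 1 - (1 - (99 * c / 100) ^ 2) / (1 - c ^ 2 / 100)
        = 9701 / 10000 * c ^ 2 / (1 - c ^ 2 / 100) := by
      rw [eq_div_iff (by linarith), sub_mul, div_mul_cancel₀ _ (by linarith)]
      ring
    have hsmall : 9701 / 10000 * c * (1 + c) ≤ (1 - c / 100) ^ 2 * (1 - c ^ 2 / 100) := by
      nlinarith [mul_le_mul hsq hden (by norm_num) (sq_nonneg _)]
    calc min _ _ * (1 + c) ≤ 9701 / 10000 * c ^ 2 / (1 - c ^ 2 / 100) * (1 + c) := by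
          gcongr; exact hB ▸ min_le_right _ _
      _ ≤ c * (1 - c / 100) ^ 2 := by
          rw [div_mul_eq_mul_div, div_le_iff₀ (by linarith)]
          nlinarith [mul_le_mul_of_nonneg_left hsmall hc.le]

theorem variance_le_mul_integral_of_mem_Icc [IsProbabilityMeasure μ] {X : Ω → ℝ} {M : ℝ}
    (hXM : ∀ᵐ ω ∂μ, X ω ∈ Set.Icc 0 M) (hX : AEMeasurable X μ) :
    variance X μ ≤ M * μ[X] := by
  have := variance_le_sub_mul_sub hXM hX
  nlinarith [sq_nonneg μ[X]]

theorem variance_sum_le_mul_integral_sum_of_mem_Icc [IsProbabilityMeasure μ] {ι : Type*}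
    [Fintype ι] {R : ι → Ω → ℝ} {M : ℝ} (hR : ∀ i, AEMeasurable (R i) μ) (hindep : iIndepFun R μ)
    (hRM : ∀ i, ∀ᵐ ω ∂μ, R i ω ∈ Set.Icc 0 M) :
    variance (fun ω ↦ ∑ i, R i ω) μ ≤ M * ∫ ω, ∑ i, R i ω ∂μ := by
  have hR2 : ∀ i, MemLp (R i) 2 μ := fun i ↦ memLp_of_bounded (hRM i) (hR i).aestronglyMeasurable 2
  calc variance (fun ω ↦ ∑ i, R i ω) μ = ∑ i, variance (R i) μ := by
        rw [← IndepFun.variance_sum (fun i _ ↦ hR2 i) fun i _ j _ hij ↦ hindep.indepFun hij]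
        congr with ω
        simp
    _ ≤ ∑ i, M * μ[R i] :=
        Finset.sum_le_sum fun i _ ↦ variance_le_mul_integral_of_mem_Icc (hRM i) (hR i)
    _ = M * ∫ ω, ∑ i, R i ω ∂μ := by
        rw [← Finset.mul_sum, integral_finsetSum _ fun i _ ↦ (hR2 i).integrable one_le_two]

end

/-- If R_1,…,R_d are independent with 0 ≤ R_i ≤ M a.s. and
E[∑ R_i] ≥ c·M for some c ∈ (0,1], then
Pr[∑ R_i ≥ (c²/100)·M] ≥ min(1/100, 1 − (1−(99c/100)²)/(1 − c²/100)). -/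
theorem independent_sum_anticoncentration
    {Ω : Type*} [MeasurableSpace Ω] (μ : Measure Ω) [IsProbabilityMeasure μ]
    (d : ℕ) (R : Fin d → Ω → ℝ)
    (hmeas : ∀ i, Measurable (R i))
    (hindep : ProbabilityTheory.iIndepFun R μ)
    (M c : ℝ) (hM : 0 < M) (hc : 0 < c) (hc' : c ≤ 1)
    (hbdd : ∀ i, ∀ᵐ ω ∂μ, R i ω ∈ Set.Icc 0 M)
    (hE : c * M ≤ ∫ ω, ∑ i, R i ω ∂μ) :
    min (1 / 100) (1 - (1 - (99 * c / 100) ^ 2) / (1 - c ^ 2 / 100))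
      ≤ (μ {ω | (c ^ 2 / 100) * M ≤ ∑ i, R i ω}).toReal := by
  set S := fun ω ↦ ∑ i, R i ω
  set u := ∫ ω, S ω ∂μ
  have hu : 0 < u := (mul_pos hc hM).trans_le hE
  have hS2 : MemLp S 2 μ :=
    memLp_finsetSum _ fun i _ ↦ memLp_of_bounded (hbdd i) (hmeas i).aestronglyMeasurable 2
  have hvar : c * variance S μ ≤ u ^ 2 := calc
    c * variance S μ ≤ c * (M * u) := by
      gcongr
      exact variance_sum_le_mul_integral_sum_of_mem_Icc (fun i ↦ (hmeas i).aemeasurable) hindep hbdd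
    _ ≤ u ^ 2 := by nlinarith
  have hlevel : {ω | c / 100 * u ≤ S ω} ⊆ {ω | (c ^ 2 / 100) * M ≤ S ω} := fun ω hω ↦ by
    simp only [Set.mem_ofPred_eq] at hω ⊢
    nlinarith
  calc min (1 / 100) (1 - (1 - (99 * c / 100) ^ 2) / (1 - c ^ 2 / 100))
      ≤ c * (1 - c / 100) ^ 2 / (1 + c) := min_anticoncentration_bound_le hc hc'
    _ ≤ μ.real {ω | c / 100 * u ≤ S ω} := by
      rw [div_le_iff₀' (by linarith)]
      exact mul_sq_one_sub_le_measureReal_ge (by fun_prop) hS2 hc.le (by positivity)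
        (by linarith) hu hvar
    _ ≤ μ.real {ω | (c ^ 2 / 100) * M ≤ S ω} := measureReal_mono hlevel
end
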